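/- arXiv:1401.0964 — 6 statements merged into one kernel-verified Lean document; each statement's English description precedes it below -/
import Mathlib

section
/- Let p be a prime, f(X) = a₀X² + a₁X + a₂ ∈ F_p[X] with a₀ ≠ 0 and f square-free (i.e., f has no repeated roots, equivalently a₁² - 4a₀a₂ ≠ 0). For λ ∈ F_p with λ ≠ 0 and λ ≠ 1, the polynomial Q_λ(X,Y) = f(X) - λ·f(Y) ∈ F_p[X,Y] is irreducible over the algebraic closure of F_p. -/
/-!
Write `f = a₀ X² + a₁ X + a₂` and `K` for the algebraic closure. Seen as a polynomial in `X` over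
`K[Y]`, `f(X) - λ f(Y)` is quadratic with unit leading coefficient, so it is irreducible as soon as
it has no root `x ∈ K[Y]`, i.e. no `x` with `f(x) = λ f(Y)`. Comparing degrees forces
`x = u Y + v`; comparing coefficients then gives `u² = λ` and `2 a₀ v + a₁ = u a₁`, whence
`(λ - 1)(a₁² - 4 a₀ a₂) = 0`.
-/

section Polynomial

open Polynomial

variable {R : Type*} [CommRing R] [IsDomain R]

theorem Polynomial.irreducible_map_C_sub_C_iff {f g : R[X]} (hu : IsUnit f.leadingCoeff)
    (hf2 : 2 ≤ f.natDegree) (hf3 : f.natDegree ≤ 3) :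
    Irreducible (f.map C - C g) ↔ ∀ x, f.comp x ≠ g := by
  obtain ⟨u, hu⟩ := hu
  have hdeg : (f.map C - C g).natDegree = f.natDegree := by
    rw [natDegree_sub_C, natDegree_map_eq_of_injective C_injective]
  have hlead : (f.map C - C g).leadingCoeff = C (u : R) := by
    rw [leadingCoeff_sub_of_degree_lt, leadingCoeff_map_of_injective C_injective, hu]
    refine degree_C_le.trans_lt ?_
    rw [degree_map_eq_of_injective C_injective]
    exact natDegree_pos_iff_degree_pos.mp (by omega)
  have hunit : IsUnit (C (↑u⁻¹ : R)) := (Units.isUnit _).map C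
  have hmonic : ((f.map C - C g) * C (C (↑u⁻¹ : R))).Monic :=
    monic_mul_C_of_leadingCoeff_mul_eq_one (by rw [hlead, ← C_mul, u.mul_inv, C_1])
  rw [← irreducible_mul_isUnit (hunit.map C),
    hmonic.irreducible_iff_roots_eq_zero_of_degree_le_three, Multiset.eq_zero_iff_forall_notMem]
  · simp [mem_roots hmonic.ne_zero, eval_map, sub_eq_zero, comp]
  all_goals rw [natDegree_mul_C_of_isUnit hunit, hdeg]; assumption

theorem Polynomial.quadratic_comp_ne_C_mul_self {a b c l : R} (ha : a ≠ 0)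
    (hd : discrim a b c ≠ 0) (hl0 : l ≠ 0) (hl1 : l ≠ 1) (x : R[X]) :
    (C a * X ^ 2 + C b * X + C c).comp x ≠ C l * (C a * X ^ 2 + C b * X + C c) := by
  intro h
  have hx : x.natDegree = 1 := by
    have := congrArg natDegree h
    rw [natDegree_comp, natDegree_C_mul hl0, natDegree_quadratic ha] at this
    omega
  obtain ⟨u, v, rfl⟩ := exists_eq_X_add_C_of_natDegree_le_one hx.le
  have hcomp : (C a * X ^ 2 + C b * X + C c).comp (C u * X + C v) =
      C (a * u ^ 2) * X ^ 2 + C (2 * a * u * v + b * u) * X + C (a * v ^ 2 + b * v + c) := by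
    simp only [add_comp, mul_comp, C_comp, X_comp, pow_comp, C_add, C_mul, C_pow, C_ofNat]
    ring
  have hrhs : C l * (C a * X ^ 2 + C b * X + C c) =
      C (l * a) * X ^ 2 + C (l * b) * X + C (l * c) := by
    simp only [C_mul]
    ring
  rw [hcomp, hrhs] at h
  have h2 := congrArg (coeff · 2) h
  have h1 := congrArg (coeff · 1) h
  have h0 := congrArg (coeff · 0) h
  simp only [coeff_add, coeff_C_mul, coeff_X_pow, coeff_X, coeff_C] at h2 h1 h0
  norm_num at h2 h1 h0
  have hu2 : u ^ 2 = l := mul_left_cancel₀ ha (by linear_combination h2)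
  have hu : u ≠ 0 := by rintro rfl; exact hl0 (by simpa using hu2.symm)
  have hlin : 2 * a * v + b = u * b := mul_left_cancel₀ hu (by linear_combination h1 - b * hu2)
  have : (l - 1) * discrim a b c = 0 := by
    rw [discrim]
    linear_combination (-(2 * a * v + b + u * b)) * hlin + 4 * a * h0 - b ^ 2 * hu2
  exact hd (by simpa [sub_eq_zero, hl1] using this)

end Polynomial

namespace MvPolynomial

variable (R : Type*) [CommRing R]

noncomputable def finTwoAlgEquiv : MvPolynomial (Fin 2) R ≃ₐ[R] Polynomial (Polynomial R) :=
  (finSuccEquiv R 1).trans (Polynomial.mapAlgEquiv (uniqueAlgEquiv R (Fin 1)))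

variable {R}

@[simp]
theorem finTwoAlgEquiv_X_zero : finTwoAlgEquiv R (X 0) = Polynomial.X := by
  simp [finTwoAlgEquiv, finSuccEquiv_X_zero]

@[simp]
theorem finTwoAlgEquiv_X_one : finTwoAlgEquiv R (X 1) = Polynomial.C Polynomial.X := by
  rw [finTwoAlgEquiv, AlgEquiv.trans_apply, show (1 : Fin 2) = Fin.succ 0 from rfl,
    finSuccEquiv_X_succ]
  simp

@[simp]
theorem finTwoAlgEquiv_C (r : R) :
    finTwoAlgEquiv R (C r) = Polynomial.C (Polynomial.C r) := by
  simp [finTwoAlgEquiv, finSuccEquiv_apply]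

theorem irreducible_quadratic_sub_C_mul [IsDomain R] {a b c l : R} (ha : IsUnit a)
    (hd : discrim a b c ≠ 0) (hl0 : l ≠ 0) (hl1 : l ≠ 1) :
    Irreducible ((C a * X 0 ^ 2 + C b * X 0 + C c) - C l * (C a * X 1 ^ 2 + C b * X 1 + C c) :
      MvPolynomial (Fin 2) R) := by
  set f : Polynomial R := .C a * .X ^ 2 + .C b * .X + .C c
  have hf : f.natDegree = 2 := Polynomial.natDegree_quadratic ha.ne_zero
  have he : finTwoAlgEquiv R ((C a * X 0 ^ 2 + C b * X 0 + C c) -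
      C l * (C a * X 1 ^ 2 + C b * X 1 + C c)) = f.map Polynomial.C - .C (.C l * f) := by
    simp [f]
  rw [← MulEquiv.irreducible_iff (finTwoAlgEquiv R), he,
    Polynomial.irreducible_map_C_sub_C_iff (by rwa [Polynomial.leadingCoeff_quadratic ha.ne_zero])
      hf.ge (by omega)]
  exact Polynomial.quadratic_comp_ne_C_mul_self ha.ne_zero hd hl0 hl1

end MvPolynomial

open MvPolynomial in
theorem stmt_1 (p : ℕ) [Fact p.Prime] (a₀ a₁ a₂ lam : ZMod p)
    (ha₀ : a₀ ≠ 0) (hsf : a₁ ^ 2 - 4 * a₀ * a₂ ≠ 0)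
    (hlam0 : lam ≠ 0) (hlam1 : lam ≠ 1) :
    Irreducible
      ((C (algebraMap (ZMod p) (AlgebraicClosure (ZMod p)) a₀) * (X 0) ^ 2 +
        C (algebraMap (ZMod p) (AlgebraicClosure (ZMod p)) a₁) * X 0 +
        C (algebraMap (ZMod p) (AlgebraicClosure (ZMod p)) a₂)) -
       C (algebraMap (ZMod p) (AlgebraicClosure (ZMod p)) lam) *
        (C (algebraMap (ZMod p) (AlgebraicClosure (ZMod p)) a₀) * (X 1) ^ 2 +
         C (algebraMap (ZMod p) (AlgebraicClosure (ZMod p)) a₁) * X 1 +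
         C (algebraMap (ZMod p) (AlgebraicClosure (ZMod p)) a₂)) :
        MvPolynomial (Fin 2) (AlgebraicClosure (ZMod p))) := by
  set φ := algebraMap (ZMod p) (AlgebraicClosure (ZMod p))
  refine irreducible_quadratic_sub_C_mul ((map_ne_zero φ).mpr ha₀).isUnit ?_
    ((map_ne_zero φ).mpr hlam0) ((map_ne_one_iff φ φ.injective).mpr hlam1)
  simpa [discrim, map_ofNat φ 4] using (map_ne_zero φ).mpr hsf
end

section
/- Let p be a prime, m ≥ 1, and let V₁, ..., V_m be real numbers with p > V_i ≥ 1 for all i and V₁⋯V_m > p^{m-1}. Then for any integers b₁, ..., b_m there exists an integer v with gcd(v, p) = 1 such that for each i = 1, ..., m, the least absolute residue of b_i·v modulo p has absolute value at most V_i. -/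
/-!
Minkowski's convex body theorem. We may assume `b j ≢ 0 (mod p)` for some `j` (otherwise `v = 1`);
scaling by `(b j)⁻¹ mod p`, the vectors congruent modulo `p` to a multiple of `b` form a lattice of
covolume `p ^ (m - 1)`. The box `∏ [-V i, V i]` has volume `2 ^ m ∏ V i > 2 ^ m p ^ (m - 1)`, so it
contains a nonzero lattice point `y ≡ t b`. As `|y i| < p`, the multiplier `t` is not `0 mod p`.
-/

open Matrix MeasureTheory

theorem Matrix.exists_int_vecMul_abs_le_of_abs_det_lt_prod {ι : Type*} [Fintype ι]
    [DecidableEq ι] (M : Matrix ι ι ℝ) (hM : M.det ≠ 0) (V : ι → ℝ) (hV : ∀ i, 0 ≤ V i)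
    (h : |M.det| < ∏ i, V i) :
    ∃ n : ι → ℤ, (Int.cast ∘ n) ᵥ* M ≠ 0 ∧ ∀ i, |((Int.cast ∘ n) ᵥ* M) i| ≤ V i := by
  let b := basisOfLinearIndependentOfCardEqFinrank' (K := ℝ) _
    (linearIndependent_rows_of_det_ne_zero hM) (Module.finrank_fintype_fun_eq_card ℝ).symm
  have hvol : volume (ZSpan.fundamentalDomain b) * 2 ^ Module.finrank ℝ (ι → ℝ)
      < volume (Set.Icc (-V) V) := by
    rw [ZSpan.volume_fundamentalDomain, Real.volume_Icc_pi, Module.finrank_fintype_fun_eq_card,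
      ← ENNReal.ofReal_prod_of_nonneg (fun i _ => by simp; linarith [hV i])]
    have hb : Matrix.of b = M := by ext; simp [b]
    have h2 : (2 : ENNReal) ^ Fintype.card ι = ENNReal.ofReal (2 ^ Fintype.card ι) := by simp
    rw [hb, h2, ← ENNReal.ofReal_mul (abs_nonneg _),
      ENNReal.ofReal_lt_ofReal_iff_of_nonneg (by positivity)]
    simp only [Pi.neg_apply, sub_neg_eq_add, ← two_mul, Finset.prod_mul_distrib,
      Finset.prod_const, Finset.card_univ]
    nlinarith [pow_pos (two_pos (α := ℝ)) (Fintype.card ι)]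
  have : Countable (Submodule.span ℤ (Set.range b)).toAddSubgroup :=
    inferInstanceAs (Countable (Submodule.span ℤ (Set.range b)))
  obtain ⟨⟨x, hxL⟩, hx0, hxV⟩ := exists_ne_zero_mem_lattice_of_measure_mul_two_pow_lt_measure
    (ZSpan.isAddFundamentalDomain' b volume)
    (fun x (hx : x ∈ Set.Icc (-V) V) => ⟨neg_le_neg hx.2, by simpa using neg_le_neg hx.1⟩)
    (convex_Icc (-V) V) hvol
  obtain ⟨n, rfl⟩ := (Submodule.mem_span_range_iff_exists_fun ℤ).mp hxL
  have hx : ∑ i, n i • b i = (Int.cast ∘ n) ᵥ* M := by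
    ext j; simp [b, vecMul, dotProduct]
  simp only [hx] at hxV
  exact ⟨n, fun h0 => hx0 (Subtype.ext (hx.trans h0)),
    fun i => abs_le.mpr ⟨hxV.1 i, hxV.2 i⟩⟩

theorem Matrix.det_updateRow_smul_one {n R : Type*} [Fintype n] [DecidableEq n] [CommRing R]
    (s : R) (j : n) (c : n → R) :
    ((s • (1 : Matrix n n R)).updateRow j c).det = s ^ (Fintype.card n - 1) * c j := by
  have hc : ∑ k, c k • (1 : Matrix n n R) k = c := by
    ext i; simp [Matrix.one_apply]
  rw [det_updateRow_smul_left]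
  congr 1
  simpa [hc] using det_updateRow_sum (1 : Matrix n n R) j c

theorem Matrix.vecMul_updateRow_smul_one {n R : Type*} [Fintype n] [DecidableEq n] [CommRing R]
    (v : n → R) (s : R) (j : n) (c : n → R) :
    v ᵥ* (s • (1 : Matrix n n R)).updateRow j c = v j • c + s • Function.update v j 0 := by
  ext i
  rw [vecMul, dotProduct, Fintype.sum_eq_add_sum_compl j, updateRow_self]
  congr 1
  rw [Finset.sum_congr rfl fun k hk => by rw [updateRow_ne (by simpa using hk : k ≠ j)]]
  simp [Matrix.one_apply, Finset.sum_ite_eq', Function.update_apply, mul_comm]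

theorem exists_abs_sub_mul_le_of_intCast_eq {p : ℕ} {x y : ℤ} {V : ℝ}
    (h : (x : ZMod p) = y) (hy : |(y : ℝ)| ≤ V) : ∃ k : ℤ, |(x : ℝ) - k * p| ≤ V := by
  obtain ⟨k, hk⟩ := (ZMod.intCast_eq_intCast_iff_dvd_sub _ _ _).mp h.symm
  refine ⟨k, ?_⟩
  have hxy : (x : ℝ) - k * p = y := by exact_mod_cast (by linarith : x - k * p = y)
  rwa [hxy]

theorem ZMod.exists_ne_zero_forall_abs_le_of_pow_lt_prod {ι : Type*} [Fintype ι] [DecidableEq ι]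
    {p : ℕ} [Fact p.Prime] (β : ι → ZMod p) (V : ι → ℝ) (hV : ∀ i, 0 ≤ V i ∧ V i < p)
    (hprod : (p : ℝ) ^ (Fintype.card ι - 1) < ∏ i, V i) :
    ∃ v : ZMod p, v ≠ 0 ∧ ∀ i, ∃ y : ℤ, (y : ZMod p) = β i * v ∧ |(y : ℝ)| ≤ V i := by
  by_cases hβ : β = 0
  · exact ⟨1, one_ne_zero, fun i => ⟨0, by simp [hβ], by simpa using (hV i).1⟩⟩
  obtain ⟨j, hj⟩ := Function.ne_iff.mp hβ
  let c : ι → ℤ := fun i => ((β i * (β j)⁻¹).val : ℤ)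
  have hc : ∀ i, (c i : ZMod p) = β i * (β j)⁻¹ := fun i => by simp [c]
  have hcj : c j = 1 := by simp only [c, mul_inv_cancel₀ hj, ZMod.val_one, Nat.cast_one]
  -- The rows of `M` span `{y | y ≡ t • c (mod p) for some t}`.
  let M : Matrix ι ι ℤ := ((p : ℤ) • (1 : Matrix ι ι ℤ)).updateRow j c
  have hdet : (M.map (Int.cast : ℤ → ℝ)).det = (p : ℝ) ^ (Fintype.card ι - 1) := by
    rw [← Int.cast_det, det_updateRow_smul_one, hcj]; simp
  have hdet0 : (p : ℝ) ^ (Fintype.card ι - 1) ≠ 0 :=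
    pow_ne_zero _ (Nat.cast_ne_zero.mpr (Fact.out : p.Prime).ne_zero)
  obtain ⟨n, hn0, hnV⟩ := (M.map (Int.cast : ℤ → ℝ)).exists_int_vecMul_abs_le_of_abs_det_lt_prod
    (hdet ▸ hdet0) V (fun i => (hV i).1) (by rwa [hdet, abs_of_nonneg (by positivity)])
  have hreal : (Int.cast ∘ n) ᵥ* M.map (Int.cast : ℤ → ℝ) = Int.cast ∘ (n ᵥ* M) := by
    ext i; exact ((Int.castRingHom ℝ).map_vecMul M n i).symm
  have hmod : ∀ i, (((n ᵥ* M) i : ℤ) : ZMod p) = β i * (n j * (β j)⁻¹) := fun i => by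
    rw [vecMul_updateRow_smul_one]
    simp [hc]
    ring
  refine ⟨n j * (β j)⁻¹, fun hv => hn0 ?_, fun i => ⟨_, hmod i, by simpa [hreal] using hnV i⟩⟩
  rw [hreal]
  ext i
  have hdvd : (p : ℤ) ∣ (n ᵥ* M) i := by
    rw [← ZMod.intCast_zmod_eq_zero_iff_dvd, hmod i, hv, mul_zero]
  have hlt : |(n ᵥ* M) i| < p := by
    have := (hnV i).trans_lt (hV i).2
    simp only [hreal, Function.comp_apply] at this
    exact_mod_cast this
  simp [Int.eq_zero_of_abs_lt_dvd hdvd hlt]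

theorem stmt_2_general (p m : ℕ) (hp : p.Prime) (V : Fin m → ℝ)
    (hV : ∀ i, 1 ≤ V i ∧ V i < p) (hprod : (p : ℝ) ^ (m - 1) < ∏ i, V i)
    (b : Fin m → ℤ) :
    ∃ v : ℤ, Int.gcd v p = 1 ∧
      ∀ i, ∃ k : ℤ, (|b i * v - k * p| : ℝ) ≤ V i := by
  have := Fact.mk hp
  obtain ⟨v, hv0, hv⟩ := ZMod.exists_ne_zero_forall_abs_le_of_pow_lt_prod
    (fun i => (b i : ZMod p)) V (fun i => ⟨zero_le_one.trans (hV i).1, (hV i).2⟩)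
    (by simpa using hprod)
  refine ⟨v.val, ?_, fun i => ?_⟩
  · rw [Int.gcd_natCast_natCast, ← Nat.Coprime, Nat.coprime_comm, hp.coprime_iff_not_dvd,
      ← ZMod.natCast_eq_zero_iff, ZMod.natCast_zmod_val]
    exact hv0
  · obtain ⟨y, hy, hyV⟩ := hv i
    exact_mod_cast exists_abs_sub_mul_le_of_intCast_eq (x := b i * v.val)
      (by push_cast; rw [hy, ZMod.natCast_zmod_val]) hyV

theorem stmt_2 (p m : ℕ) (hp : p.Prime) (hm : 1 ≤ m) (V : Fin m → ℝ)
    (hV : ∀ i, 1 ≤ V i ∧ V i < p) (hprod : (p : ℝ) ^ (m - 1) < ∏ i, V i)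
    (b : Fin m → ℤ) :
    ∃ v : ℤ, Int.gcd v p = 1 ∧
      ∀ i, ∃ k : ℤ, (|b i * v - k * p| : ℝ) ≤ V i :=
  stmt_2_general p m hp V hV hprod b
end

section
/- Let ν ≥ 1 and d ≥ 1 be integers. Suppose x = (x₁, ..., x_ν) and y = (y₁, ..., y_ν) are vectors of positive integers such that the polynomial identity ∏_{i=1}^ν (x_i^d + Σ_{k=0}^{d-1} Z_{d-k} x_i^k) = ∏_{i=1}^ν (y_i^d + Σ_{k=0}^{d-1} Z_{d-k} y_i^k) holds identically in ℤ[Z₁, ..., Z_d]. Then (y₁, ..., y_ν) is a permutation of (x₁, ..., x_ν). -/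
/-!
Specialising `Z_d ↦ T` and all other `Z_j ↦ 0` turns the identity into
`∏ (T + x_i^d) = ∏ (T + y_i^d)` in `ℤ[T]`. Comparing roots, the multisets `{-x_i^d}` and
`{-y_i^d}` agree, and `n ↦ n^d` is injective on `ℕ` for `d ≥ 1`.
-/

open MvPolynomial

/-- `a^d + Z₁ a^(d-1) + ⋯ + Z_d`, where the variable `X j` plays the role of `Z_(j+1)`. -/
noncomputable def genericMonicEval (R : Type*) [CommRing R] (d : ℕ) (a : R) :
    MvPolynomial (Fin d) R :=
  C (a ^ d) + ∑ j : Fin d, X j * C (a ^ (d - 1 - (j : ℕ)))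

lemma aeval_single_last_genericMonicEval {R : Type*} [CommRing R] (n : ℕ) (a : R) :
    aeval (Pi.single (Fin.last n) Polynomial.X) (genericMonicEval R (n + 1) a) =
      Polynomial.X - Polynomial.C (-a ^ (n + 1)) := by
  simp only [genericMonicEval, add_tsub_cancel_right, map_add, map_pow, algHom_C,
    Polynomial.algebraMap_eq, map_sum, map_mul, aeval_X, Pi.single_apply, ite_mul, zero_mul,
    Finset.sum_ite_eq', Finset.mem_univ, ↓reduceIte, Fin.val_last, tsub_self, pow_zero, mul_one,
    Polynomial.C_neg, sub_neg_eq_add]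
  ring

lemma Polynomial.roots_prod_X_sub_C_apply {R ι : Type*} [CommRing R] [IsDomain R]
    (s : Finset ι) (f : ι → R) :
    (∏ i ∈ s, (X - C (f i))).roots = s.val.map f := by
  rw [← roots_multiset_prod_X_sub_C (s.val.map f), Multiset.map_map, Finset.prod_eq_multiset_prod]
  rfl

lemma Fin.exists_perm_eq_comp_of_map_univ_eq {n : ℕ} {α : Type*} [LinearOrder α]
    {x y : Fin n → α} (h : Finset.univ.val.map y = Finset.univ.val.map x) :
    ∃ σ : Equiv.Perm (Fin n), y = x ∘ σ := by
  refine ⟨(Tuple.sort y).symm.trans (Tuple.sort x), ?_⟩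
  have hperm : (List.ofFn y).Perm (List.ofFn x) := by
    rw [Fin.univ_val_map, Fin.univ_val_map] at h
    exact Multiset.coe_eq_coe.mp h
  have hsorted : y ∘ Tuple.sort y = x ∘ Tuple.sort x :=
    List.ofFn_injective <| List.Perm.eq_of_sortedLE
      (Tuple.monotone_sort y).sortedLE_ofFn (Tuple.monotone_sort x).sortedLE_ofFn
      (((Equiv.Perm.ofFn_comp_perm _ y).trans hperm).trans (Equiv.Perm.ofFn_comp_perm _ x).symm)
  funext i
  simpa using congrFun hsorted ((Tuple.sort y).symm i)

lemma neg_natCast_pow_injective {d : ℕ} (hd : d ≠ 0) :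
    Function.Injective (fun n : ℕ => -((n : ℤ) ^ d)) := by
  intro a b hab
  simp only [neg_inj] at hab
  exact Nat.pow_left_injective hd (by exact_mod_cast hab)

open MvPolynomial in
theorem stmt_4_general (ν d : ℕ) (hd : 1 ≤ d)
    (x y : Fin ν → ℕ)
    (h : (∏ i, (C ((x i : ℤ) ^ d) +
          ∑ j : Fin d, X j * C ((x i : ℤ) ^ (d - 1 - (j : ℕ)))) :
            MvPolynomial (Fin d) ℤ) =
         ∏ i, (C ((y i : ℤ) ^ d) +
          ∑ j : Fin d, X j * C ((y i : ℤ) ^ (d - 1 - (j : ℕ))))) :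
    ∃ σ : Equiv.Perm (Fin ν), y = x ∘ σ := by
  obtain ⟨n, rfl⟩ := Nat.exists_eq_add_of_le' hd
  have hspec := congrArg (aeval (Pi.single (Fin.last n) (Polynomial.X : Polynomial ℤ))) h
  simp only [map_prod] at hspec
  change ∏ i, aeval _ (genericMonicEval ℤ (n + 1) (x i)) =
    ∏ i, aeval _ (genericMonicEval ℤ (n + 1) (y i)) at hspec
  simp only [aeval_single_last_genericMonicEval] at hspec
  have hroots := congrArg Polynomial.roots hspec
  rw [Polynomial.roots_prod_X_sub_C_apply, Polynomial.roots_prod_X_sub_C_apply] at hroots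
  refine Fin.exists_perm_eq_comp_of_map_univ_eq
    (Multiset.map_injective (neg_natCast_pow_injective n.add_one_ne_zero) ?_).symm
  simpa only [Multiset.map_map, Function.comp_def] using hroots

open MvPolynomial in
theorem stmt_4 (ν d : ℕ) (hν : 1 ≤ ν) (hd : 1 ≤ d)
    (x y : Fin ν → ℕ) (hx : ∀ i, 1 ≤ x i) (hy : ∀ i, 1 ≤ y i)
    (h : (∏ i, (C ((x i : ℤ) ^ d) +
          ∑ j : Fin d, X j * C ((x i : ℤ) ^ (d - 1 - (j : ℕ)))) :
            MvPolynomial (Fin d) ℤ) =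
         ∏ i, (C ((y i : ℤ) ^ d) +
          ∑ j : Fin d, X j * C ((y i : ℤ) ^ (d - 1 - (j : ℕ))))) :
    ∃ σ : Equiv.Perm (Fin ν), y = x ∘ σ :=
  stmt_4_general ν d hd x y h
end

section
/- Let p be a prime and f(X) = a₀X² + a₁X + a₂ ∈ F_p[X] with a₀ ≠ 0. Suppose x₁ < x₂ < ... < x_k are elements of F_p with f(x_i) ∈ G for a multiplicative subgroup G of F_p* of order T, and k ≥ 4. Then there exists λ ∈ G with λ ≠ 1 such that the congruence f(x) ≡ λ f(y) (mod p) holds for at least (k² - 2k)/T ≥ k²/(2T) pairs (x, y) with x, y ∈ {x₁, ..., x_k}. -/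
/-!
Write `g_i ∈ G` for the value `f(x_i)`. Since `f` is quadratic, each value is taken at most twice,
so at most `2k` of the `k²` ordered pairs `(i, j)` have `g_i = g_j`. The remaining `≥ k² - 2k`
pairs have ratio `g_i / g_j ∈ G \ {1}`, a set of fewer than `T` elements, so by pigeonhole some
ratio `λ` occurs for at least `(k² - 2k) / T` of them, and `k² - 2k ≥ k² / 2` once `k ≥ 4`.
-/

open Polynomial Finset

lemma card_filter_eval_eq_le_natDegree {R ι : Type*} [CommRing R] [IsDomain R] [DecidableEq R]
    [Fintype ι] {f : R[X]} (hf : 0 < f.natDegree) {x : ι → R} (hx : Function.Injective x)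
    (c : R) : #{j | f.eval (x j) = c} ≤ f.natDegree := by
  have hroots : (({j | f.eval (x j) = c} : Finset ι).image x).val ⊆ (f - C c).roots := by
    intro y hy
    obtain ⟨j, hj, rfl⟩ := Finset.mem_image.mp hy
    have hne : f - C c ≠ 0 := fun h => by
      simp [sub_eq_zero.mp h] at hf
    rw [mem_roots hne, IsRoot, eval_sub, eval_C, sub_eq_zero]
    exact (Finset.mem_filter.mp hj).2
  calc #{j | f.eval (x j) = c} = #(({j | f.eval (x j) = c} : Finset ι).image x) :=
        (card_image_of_injective _ hx).symm
    _ ≤ (f - C c).natDegree := card_le_degree_of_subset_roots hroots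
    _ = f.natDegree := natDegree_sub_C

lemma card_filter_apply_eq_apply_le {ι β : Type*} [Fintype ι] [DecidableEq β] (v : ι → β)
    {d : ℕ} (hv : ∀ c, #{j | v j = c} ≤ d) :
    #{q : ι × ι | v q.1 = v q.2} ≤ d * Fintype.card ι := by
  calc #{q : ι × ι | v q.1 = v q.2} = ∑ i, #{j | v j = v i} := by
        simp only [card_filter, Fintype.sum_prod_type, eq_comm]
    _ ≤ ∑ _i : ι, d := sum_le_sum fun i _ => hv (v i)
    _ = d * Fintype.card ι := by simp [mul_comm]

lemma exists_card_le_mul_card_fiber {α β : Type*} [DecidableEq β] {s : Finset α} {t : Finset β}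
    {g : α → β} (hg : ∀ a ∈ s, g a ∈ t) (ht : t.Nonempty) :
    ∃ y ∈ t, #s ≤ #t * #{a ∈ s | g a = y} := by
  obtain ⟨y, hy, hmax⟩ := t.exists_max_image (fun y => #{a ∈ s | g a = y}) ht
  exact ⟨y, hy, mul_comm #t _ ▸ card_le_mul_card_image_of_maps_to hg _ hmax⟩

lemma exists_ne_one_card_filter_ne_le_mul_ncard {M ι : Type*} [Monoid M] [DecidableEq M]
    [Fintype ι] (G : Subgroup Mˣ) [Finite G] (v : ι → M) (hv : ∀ i, ∃ g ∈ G, (g : M) = v i)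
    (hne : 0 < #{q : ι × ι | v q.1 ≠ v q.2}) :
    ∃ lam ∈ G, lam ≠ 1 ∧ #{q : ι × ι | v q.1 ≠ v q.2} ≤
      Nat.card G * {q : ι × ι | v q.1 = (lam : M) * v q.2}.ncard := by
  have := Fintype.ofFinite G
  choose g hgG hg using hv
  let S : Finset (ι × ι) := {q | v q.1 ≠ v q.2}
  let ratio : ι × ι → G := fun q => ⟨g q.1, hgG q.1⟩ / ⟨g q.2, hgG q.2⟩
  have hratio : ∀ q ∈ S, ratio q ∈ univ.erase 1 := by
    intro q hq
    refine mem_erase.mpr ⟨fun h => (mem_filter.mp hq).2 ?_, mem_univ _⟩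
    have : g q.1 = g q.2 := congrArg Subtype.val (div_eq_one.mp h)
    rw [← hg, ← hg, this]
  obtain ⟨q, hq⟩ := card_pos.mp hne
  obtain ⟨lam, hlam, hS⟩ := exists_card_le_mul_card_fiber hratio ⟨ratio q, hratio q hq⟩
  have hfiber :
      #{a ∈ S | ratio a = lam} ≤ {q : ι × ι | v q.1 = ((lam : Mˣ) : M) * v q.2}.ncard := by
    rw [← Set.ncard_coe_finset]
    refine Set.ncard_le_ncard (fun a ha => ?_) (Set.toFinite _)
    have hga : g a.1 = lam * g a.2 := by
      simpa [ratio, div_eq_iff_eq_mul] using congrArg Subtype.val (mem_filter.mp ha).2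
    show v a.1 = _ * v a.2
    rw [← hg, ← hg, hga, Units.val_mul]
  have herase : #(univ.erase (1 : G)) ≤ Nat.card G :=
    (card_erase_le).trans (Nat.card_eq_fintype_card (α := G)).ge
  exact ⟨lam, lam.2, fun h => (mem_erase.mp hlam).1 (Subtype.ext h),
    hS.trans (Nat.mul_le_mul herase hfiber)⟩

theorem stmt_7 (p : ℕ) [Fact p.Prime] (a₀ a₁ a₂ : ZMod p) (ha₀ : a₀ ≠ 0)
    (f : Polynomial (ZMod p))
    (hf : f = Polynomial.C a₀ * Polynomial.X ^ 2 + Polynomial.C a₁ * Polynomial.X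
      + Polynomial.C a₂)
    (k : ℕ) (hk : 4 ≤ k) (x : Fin k → ZMod p) (hinj : Function.Injective x)
    (G : Subgroup (ZMod p)ˣ) (T : ℕ) (hT : Nat.card G = T)
    (hmem : ∀ i, ∃ g ∈ G, ((g : (ZMod p)ˣ) : ZMod p) = f.eval (x i)) :
    ∃ lam : (ZMod p)ˣ, lam ∈ G ∧ (lam : ZMod p) ≠ 1 ∧
      k ^ 2 - 2 * k ≤ T * {q : Fin k × Fin k |
          f.eval (x q.1) = (lam : ZMod p) * f.eval (x q.2)}.ncard ∧
      k ^ 2 ≤ 2 * T * {q : Fin k × Fin k |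
          f.eval (x q.1) = (lam : ZMod p) * f.eval (x q.2)}.ncard := by
  set v : Fin k → ZMod p := fun i => f.eval (x i)
  have hdeg : f.natDegree = 2 := hf ▸ natDegree_quadratic ha₀
  have hk2 : 4 * k ≤ k ^ 2 := sq k ▸ Nat.mul_le_mul_right k hk
  have hcoinc : #{q : Fin k × Fin k | v q.1 = v q.2} ≤ 2 * k := by
    simpa [hdeg] using
      card_filter_apply_eq_apply_le v (card_filter_eval_eq_le_natDegree (by omega) hinj)
  have hdistinct : k ^ 2 - 2 * k ≤ #{q : Fin k × Fin k | v q.1 ≠ v q.2} := by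
    have hsplit : #{q : Fin k × Fin k | v q.1 = v q.2} + #{q : Fin k × Fin k | v q.1 ≠ v q.2}
        = k ^ 2 := by
      simpa [sq] using
        card_filter_add_card_filter_not (s := univ) fun q : Fin k × Fin k => v q.1 = v q.2
    omega
  obtain ⟨lam, hlamG, hlam1, hcount⟩ :=
    exists_ne_one_card_filter_ne_le_mul_ncard G v hmem (by omega)
  have hmain := hdistinct.trans (hT ▸ hcount)
  refine ⟨lam, hlamG, Units.val_eq_one.not.mpr hlam1, hmain, ?_⟩
  rw [mul_assoc]
  exact le_trans (by omega) (Nat.mul_le_mul_left 2 hmain)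
end

section
/- Let p be a prime and F(X,Y) ∈ ℤ[X,Y] a quadratic polynomial, and let z be an integer. If F(X,Y) - zp is reducible over ℂ, then the reduction of F(X,Y) modulo p is reducible over the algebraic closure of F_p (or is zero or has degree less than 2 after reduction, under the assumption the leading form survives reduction). -/
/-!
If `F - z p = ℓ₁ ℓ₂` over `ℂ` with `ℓ₁, ℓ₂` linear, the discriminant
`Δ = 4acf + bde - ae² - cd² - fb²` of the coefficients of `F - z p` vanishes. Since `Δ` has
integer coefficients and shifting the constant term by `z p` changes it by a multiple of `p`,
`Δ` vanishes on the reduction of `F` modulo `p`.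

Conversely, over an algebraically closed field of any characteristic, a conic with nonzero
quadratic part and `Δ = 0` splits. Factor the quadratic part as `ℓ₁ ℓ₂`. If `ℓ₁, ℓ₂` are
independent, the linear part determines the constants of the two factors by Cramer's rule and
`Δ = 0` makes their product the constant term. If `ℓ₂ = t ℓ₁`, then `Δ = -t (a₁ e - b₁ d)²`
forces the linear part to be a multiple `μ ℓ₁`, and the conic `t ℓ₁² + μ ℓ₁ + f` factors like
the binary form `t U² + μ U V + f V²`.
-/

namespace BivariateQuadratic

open MvPolynomial

variable {R : Type*} [CommRing R]

noncomputable def expXY (i j : ℕ) : Fin 2 →₀ ℕ := Finsupp.single 0 i + Finsupp.single 1 j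

@[simp] lemma expXY_apply_zero (i j : ℕ) : expXY i j 0 = i := by simp [expXY]

@[simp] lemma expXY_apply_one (i j : ℕ) : expXY i j 1 = j := by simp [expXY]

@[simp] lemma expXY_inj {i j i' j' : ℕ} : expXY i j = expXY i' j' ↔ i = i' ∧ j = j' := by
  refine ⟨fun h => ⟨by simpa using congr($h 0), by simpa using congr($h 1)⟩, ?_⟩
  rintro ⟨rfl, rfl⟩
  rfl

lemma eq_expXY (m : Fin 2 →₀ ℕ) : m = expXY (m 0) (m 1) := by
  ext k
  fin_cases k <;> simp

lemma degree_eq (m : Fin 2 →₀ ℕ) : m.degree = m 0 + m 1 := by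
  simp [Finsupp.degree_eq_sum, Fin.sum_univ_two]

lemma coeff_expXY_C (i j : ℕ) (r : R) :
    coeff (expXY i j) (C r : MvPolynomial (Fin 2) R) = if i = 0 ∧ j = 0 then r else 0 := by
  rw [coeff_C, show (0 : Fin 2 →₀ ℕ) = expXY 0 0 by simp [expXY]]
  simp only [expXY_inj, eq_comm]

lemma monomial_expXY (i j : ℕ) (a : R) :
    monomial (expXY i j) a = C a * X 0 ^ i * X 1 ^ j := by
  simp only [expXY, X_pow_eq_monomial, C_mul_monomial, monomial_mul, mul_one]

noncomputable def quadPoly (a b c d e f : R) : MvPolynomial (Fin 2) R :=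
  C a * X 0 ^ 2 + C b * X 0 * X 1 + C c * X 1 ^ 2 + C d * X 0 + C e * X 1 + C f

noncomputable def linPoly (a b c : R) : MvPolynomial (Fin 2) R :=
  C a * X 0 + C b * X 1 + C c

lemma quadPoly_eq_sum_monomial (a b c d e f : R) :
    quadPoly a b c d e f = monomial (expXY 2 0) a + monomial (expXY 1 1) b +
      monomial (expXY 0 2) c + monomial (expXY 1 0) d + monomial (expXY 0 1) e +
      monomial (expXY 0 0) f := by
  simp only [monomial_expXY, quadPoly]
  ring

lemma totalDegree_monomial_expXY_le (i j : ℕ) (a : R) :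
    (monomial (expXY i j) a).totalDegree ≤ i + j :=
  (totalDegree_monomial_le _ _).trans_eq ((degree_eq _).trans (by simp))

lemma totalDegree_quadPoly_le (a b c d e f : R) : (quadPoly a b c d e f).totalDegree ≤ 2 := by
  rw [← mem_restrictTotalDegree, quadPoly_eq_sum_monomial]
  repeat' apply Submodule.add_mem
  all_goals
    rw [mem_restrictTotalDegree]
    exact (totalDegree_monomial_expXY_le _ _ _).trans (by norm_num)

lemma eq_quadPoly_of_totalDegree_le_two {P : MvPolynomial (Fin 2) R} (h : P.totalDegree ≤ 2) :
    P = quadPoly (coeff (expXY 2 0) P) (coeff (expXY 1 1) P) (coeff (expXY 0 2) P)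
      (coeff (expXY 1 0) P) (coeff (expXY 0 1) P) (coeff (expXY 0 0) P) := by
  ext m
  rw [eq_expXY m]
  by_cases hm : m 0 + m 1 ≤ 2
  · obtain ⟨hi, hj⟩ : m 0 ≤ 2 ∧ m 1 ≤ 2 := by omega
    interval_cases m 0 <;> interval_cases m 1 <;> try omega
    all_goals simp [quadPoly_eq_sum_monomial, coeff_monomial]
  · rw [coeff_eq_zero_of_totalDegree_lt, coeff_eq_zero_of_totalDegree_lt] <;>
      rw [← Finsupp.degree_apply, degree_eq, expXY_apply_zero, expXY_apply_one]
    · exact (totalDegree_quadPoly_le _ _ _ _ _ _).trans_lt (by omega)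
    · omega

lemma linPoly_mul_linPoly (a₁ b₁ c₁ a₂ b₂ c₂ : R) :
    linPoly a₁ b₁ c₁ * linPoly a₂ b₂ c₂ =
      quadPoly (a₁ * a₂) (a₁ * b₂ + b₁ * a₂) (b₁ * b₂) (a₁ * c₂ + c₁ * a₂)
        (b₁ * c₂ + c₁ * b₂) (c₁ * c₂) := by
  simp only [linPoly, quadPoly, map_add, map_mul]
  ring

lemma quadPoly_zero_zero_zero (d e f : R) : quadPoly 0 0 0 d e f = linPoly d e f := by
  simp [quadPoly, linPoly]

lemma linPoly_eq_sum_monomial (a b c : R) :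
    linPoly a b c = monomial (expXY 1 0) a + monomial (expXY 0 1) b + monomial (expXY 0 0) c := by
  simp only [monomial_expXY, linPoly]
  ring

lemma totalDegree_linPoly_le (a b c : R) : (linPoly a b c).totalDegree ≤ 1 := by
  rw [← mem_restrictTotalDegree, linPoly_eq_sum_monomial]
  repeat' apply Submodule.add_mem
  all_goals
    rw [mem_restrictTotalDegree]
    exact (totalDegree_monomial_expXY_le _ _ _).trans (by norm_num)

lemma one_le_totalDegree_linPoly {a b c : R} (h : a ≠ 0 ∨ b ≠ 0) :
    1 ≤ (linPoly a b c).totalDegree := by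
  obtain ⟨m, hm, hm1⟩ : ∃ m, coeff m (linPoly a b c) ≠ 0 ∧ m.degree = 1 := by
    rcases h with h | h
    · exact ⟨expXY 1 0, by simpa [linPoly_eq_sum_monomial, coeff_monomial] using h,
        by simp [degree_eq]⟩
    · exact ⟨expXY 0 1, by simpa [linPoly_eq_sum_monomial, coeff_monomial] using h,
        by simp [degree_eq]⟩
  exact hm1.symm.trans_le (le_totalDegree (mem_support_iff.mpr hm))

lemma eq_linPoly_of_totalDegree_le_one {P : MvPolynomial (Fin 2) R} (h : P.totalDegree ≤ 1) :
    P = linPoly (coeff (expXY 1 0) P) (coeff (expXY 0 1) P) (coeff (expXY 0 0) P) := by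
  have hzero : ∀ i j, i + j = 2 → coeff (expXY i j) P = 0 := fun i j hij =>
    coeff_eq_zero_of_totalDegree_lt (by rw [← Finsupp.degree_apply, degree_eq]; simp; omega)
  conv_lhs => rw [eq_quadPoly_of_totalDegree_le_two (h.trans one_le_two)]
  rw [hzero 2 0 rfl, hzero 1 1 rfl, hzero 0 2 rfl, quadPoly_zero_zero_zero]

lemma totalDegree_map_le {σ S : Type*} [CommRing S] (φ : R →+* S) (P : MvPolynomial σ R) :
    (map φ P).totalDegree ≤ P.totalDegree :=
  Finset.sup_mono (support_map_subset φ P)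

/-- Four times the determinant of the symmetric matrix of the conic, written without halves so
that it is also meaningful in characteristic `2`. -/
def quadDisc (a b c d e f : R) : R :=
  4 * a * c * f + b * d * e - a * e ^ 2 - c * d ^ 2 - f * b ^ 2

noncomputable def disc (P : MvPolynomial (Fin 2) R) : R :=
  quadDisc (coeff (expXY 2 0) P) (coeff (expXY 1 1) P) (coeff (expXY 0 2) P)
    (coeff (expXY 1 0) P) (coeff (expXY 0 1) P) (coeff (expXY 0 0) P)

@[simp] lemma disc_quadPoly (a b c d e f : R) :
    disc (quadPoly a b c d e f) = quadDisc a b c d e f := by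
  simp [disc, quadPoly_eq_sum_monomial, coeff_monomial]

lemma disc_map {S : Type*} [CommRing S] (φ : R →+* S) (P : MvPolynomial (Fin 2) R) :
    disc (map φ P) = φ (disc P) := by
  simp only [disc, quadDisc, coeff_map, map_sub, map_add, map_mul, map_pow, map_ofNat]

lemma disc_sub_C (P : MvPolynomial (Fin 2) R) (r : R) :
    disc (P - C r) = disc P - r * (4 * coeff (expXY 2 0) P * coeff (expXY 0 2) P -
      coeff (expXY 1 1) P ^ 2) := by
  simp only [disc, quadDisc, coeff_sub, coeff_expXY_C]
  norm_num
  ring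

lemma disc_mul_eq_zero {K : Type*} [CommRing K] [IsDomain K] {G₁ G₂ : MvPolynomial (Fin 2) K}
    (hdeg : (G₁ * G₂).totalDegree ≤ 2) (h₁ : 1 ≤ G₁.totalDegree) (h₂ : 1 ≤ G₂.totalDegree) :
    disc (G₁ * G₂) = 0 := by
  have hG₁ : G₁ ≠ 0 := by rintro rfl; simp at h₁
  have hG₂ : G₂ ≠ 0 := by rintro rfl; simp at h₂
  rw [totalDegree_mul_of_isDomain hG₁ hG₂] at hdeg
  rw [eq_linPoly_of_totalDegree_le_one (show G₁.totalDegree ≤ 1 by omega),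
    eq_linPoly_of_totalDegree_le_one (show G₂.totalDegree ≤ 1 by omega), linPoly_mul_linPoly,
    disc_quadPoly, quadDisc]
  ring

section IsAlgClosed

variable {k : Type*} [Field k]

lemma exists_eq_mul_of_mul_eq_mul {α β γ δ : k} (h : α ≠ 0 ∨ β ≠ 0) (hx : α * δ = β * γ) :
    ∃ μ, γ = μ * α ∧ δ = μ * β := by
  rcases h with h | h
  · exact ⟨γ / α, by field_simp, by field_simp; linear_combination hx⟩
  · exact ⟨δ / β, by field_simp; linear_combination -hx, by field_simp⟩

lemma exists_factors_of_independent {a b c d e f a₁ b₁ a₂ b₂ : k}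
    (ha : a = a₁ * a₂) (hb : b = a₁ * b₂ + b₁ * a₂) (hc : c = b₁ * b₂)
    (hD : a₁ * b₂ - a₂ * b₁ ≠ 0) (hΔ : quadDisc a b c d e f = 0) :
    ∃ c₁ c₂ : k, quadPoly a b c d e f = linPoly a₁ b₁ c₁ * linPoly a₂ b₂ c₂ := by
  obtain ⟨c₁, hc₁⟩ : ∃ c₁, (a₁ * b₂ - a₂ * b₁) * c₁ = a₁ * e - b₁ * d :=
    ⟨_, mul_div_cancel₀ _ hD⟩
  obtain ⟨c₂, hc₂⟩ : ∃ c₂, (a₁ * b₂ - a₂ * b₁) * c₂ = d * b₂ - e * a₂ :=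
    ⟨_, mul_div_cancel₀ _ hD⟩
  refine ⟨c₁, c₂, ?_⟩
  rw [linPoly_mul_linPoly, ha, hb, hc]
  unfold quadDisc at hΔ
  subst ha hb hc
  congr 1
  · exact mul_left_cancel₀ hD (by linear_combination -a₁ * hc₂ - a₂ * hc₁)
  · exact mul_left_cancel₀ hD (by linear_combination -b₁ * hc₂ - b₂ * hc₁)
  · refine mul_left_cancel₀ (pow_ne_zero 2 hD) ?_
    linear_combination -hΔ - (a₁ * b₂ - a₂ * b₁) * c₂ * hc₁ - (a₁ * e - b₁ * d) * hc₂

variable [IsAlgClosed k]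

lemma exists_binary_form_factors (a b c : k) :
    ∃ a₁ b₁ a₂ b₂ : k, a = a₁ * a₂ ∧ b = a₁ * b₂ + b₁ * a₂ ∧ c = b₁ * b₂ := by
  by_cases ha : a = 0
  · exact ⟨0, 1, b, c, by simp [ha], by ring, by ring⟩
  obtain ⟨r, hr⟩ := IsAlgClosed.exists_root (Polynomial.C a * Polynomial.X ^ 2 +
    Polynomial.C b * Polynomial.X + Polynomial.C c) (by rw [Polynomial.degree_quadratic ha]; decide)
  simp only [Polynomial.IsRoot, Polynomial.eval_add, Polynomial.eval_mul, Polynomial.eval_C,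
    Polynomial.eval_pow, Polynomial.eval_X] at hr
  exact ⟨1, -r, a, b + a * r, by ring, by ring, by linear_combination hr⟩

lemma exists_factors_of_dependent {a b c d e f a₁ b₁ t : k} (h₁ : a₁ ≠ 0 ∨ b₁ ≠ 0) (ht : t ≠ 0)
    (ha : a = t * a₁ ^ 2) (hb : b = 2 * t * a₁ * b₁) (hc : c = t * b₁ ^ 2)
    (hΔ : quadDisc a b c d e f = 0) :
    ∃ G₁ G₂ : MvPolynomial (Fin 2) k,
      quadPoly a b c d e f = G₁ * G₂ ∧ 1 ≤ G₁.totalDegree ∧ 1 ≤ G₂.totalDegree := by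
  have hsq : t * (a₁ * e - b₁ * d) ^ 2 = 0 := by
    unfold quadDisc at hΔ; subst ha hb hc; linear_combination -hΔ
  obtain ⟨μ, rfl, rfl⟩ := exists_eq_mul_of_mul_eq_mul h₁
    (sub_eq_zero.mp (pow_eq_zero_iff two_ne_zero |>.mp ((mul_eq_zero.mp hsq).resolve_left ht)))
  obtain ⟨u₁, v₁, u₂, v₂, htu, hμ, hf⟩ := exists_binary_form_factors t μ f
  have hu₁ : u₁ ≠ 0 := left_ne_zero_of_mul (htu ▸ ht)
  have hu₂ : u₂ ≠ 0 := right_ne_zero_of_mul (htu ▸ ht)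
  refine ⟨linPoly (u₁ * a₁) (u₁ * b₁) v₁, linPoly (u₂ * a₁) (u₂ * b₁) v₂, ?_,
    one_le_totalDegree_linPoly (by simpa [hu₁] using h₁),
    one_le_totalDegree_linPoly (by simpa [hu₂] using h₁)⟩
  rw [linPoly_mul_linPoly, ha, hb, hc, htu, hμ, hf]
  congr 1 <;> ring

theorem exists_factors_of_quadDisc_eq_zero {a b c d e f : k} (hq : a ≠ 0 ∨ b ≠ 0 ∨ c ≠ 0)
    (hΔ : quadDisc a b c d e f = 0) :
    ∃ G₁ G₂ : MvPolynomial (Fin 2) k,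
      quadPoly a b c d e f = G₁ * G₂ ∧ 1 ≤ G₁.totalDegree ∧ 1 ≤ G₂.totalDegree := by
  obtain ⟨a₁, b₁, a₂, b₂, ha, hb, hc⟩ := exists_binary_form_factors a b c
  have h₁ : a₁ ≠ 0 ∨ b₁ ≠ 0 := by contrapose! hq; simp [ha, hb, hc, hq]
  have h₂ : a₂ ≠ 0 ∨ b₂ ≠ 0 := by contrapose! hq; simp [ha, hb, hc, hq]
  by_cases hD : a₁ * b₂ - a₂ * b₁ = 0
  · obtain ⟨t, rfl, rfl⟩ := exists_eq_mul_of_mul_eq_mul (γ := a₂) (δ := b₂) h₁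
      (by linear_combination hD)
    refine exists_factors_of_dependent (t := t) h₁ ?_ (by rw [ha]; ring) (by rw [hb]; ring)
      (by rw [hc]; ring) hΔ
    rintro rfl
    simp at h₂
  · obtain ⟨c₁, c₂, h⟩ := exists_factors_of_independent ha hb hc hD hΔ
    exact ⟨_, _, h, one_le_totalDegree_linPoly h₁, one_le_totalDegree_linPoly h₂⟩

theorem exists_factors_of_disc_eq_zero {P : MvPolynomial (Fin 2) k} (hP : P.totalDegree = 2)
    (hΔ : disc P = 0) :
    ∃ G₁ G₂ : MvPolynomial (Fin 2) k, P = G₁ * G₂ ∧ 1 ≤ G₁.totalDegree ∧ 1 ≤ G₂.totalDegree := by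
  have hP' := eq_quadPoly_of_totalDegree_le_two hP.le
  rw [hP', disc_quadPoly] at hΔ
  rw [hP']
  refine exists_factors_of_quadDisc_eq_zero ?_ hΔ
  by_contra! h
  rw [h.1, h.2.1, h.2.2, quadPoly_zero_zero_zero] at hP'
  have := totalDegree_linPoly_le (coeff (expXY 1 0) P) (coeff (expXY 0 1) P) (coeff (expXY 0 0) P)
  rw [← hP'] at this
  omega

end IsAlgClosed

end BivariateQuadratic

open BivariateQuadratic

open MvPolynomial in
theorem stmt_8 (p : ℕ) [Fact p.Prime] (F : MvPolynomial (Fin 2) ℤ)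
    (hdeg : F.totalDegree = 2) (z : ℤ)
    (hred : ∃ G₁ G₂ : MvPolynomial (Fin 2) ℂ,
      MvPolynomial.map (Int.castRingHom ℂ) F - C ((z * p : ℤ) : ℂ) = G₁ * G₂ ∧
      1 ≤ G₁.totalDegree ∧ 1 ≤ G₂.totalDegree) :
    MvPolynomial.map (Int.castRingHom (AlgebraicClosure (ZMod p))) F = 0 ∨
    (MvPolynomial.map (Int.castRingHom (AlgebraicClosure (ZMod p))) F).totalDegree < 2 ∨
    ∃ G₁ G₂ : MvPolynomial (Fin 2) (AlgebraicClosure (ZMod p)),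
      MvPolynomial.map (Int.castRingHom (AlgebraicClosure (ZMod p))) F = G₁ * G₂ ∧
      1 ≤ G₁.totalDegree ∧ 1 ≤ G₂.totalDegree := by
  have hdeg_map {S : Type} [CommRing S] (φ : ℤ →+* S) : (map φ F).totalDegree ≤ 2 :=
    (totalDegree_map_le φ F).trans hdeg.le
  refine Or.inr (or_iff_not_imp_left.mpr fun hlt => exists_factors_of_disc_eq_zero
    ((hdeg_map _).antisymm (not_lt.mp hlt)) ?_)
  obtain ⟨G₁, G₂, hmul, h₁, h₂⟩ := hred
  have hℂ := disc_mul_eq_zero (hmul ▸ (totalDegree_sub_C_le _ _).trans (hdeg_map _)) h₁ h₂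
  rw [← hmul, disc_sub_C, disc_map, coeff_map, coeff_map, coeff_map, sub_eq_zero] at hℂ
  simp only [eq_intCast] at hℂ
  have hℤ : disc F = z * p * (4 * coeff (expXY 2 0) F * coeff (expXY 0 2) F -
      coeff (expXY 1 1) F ^ 2) := by
    exact_mod_cast hℂ
  simp [disc_map, hℤ]
end

section
/- Let K be a number field of degree k over ℚ. There is a constant C depending only on k such that for any nonzero algebraic integer γ ∈ O_K of logarithmic height at most H ≥ 2, the number of ordered pairs (γ₁, γ₂) of algebraic integers in O_K, each of logarithmic height at most H, with γ = γ₁γ₂, is at most exp(C·H/log H). -/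
/-- The logarithmic height (house) of an element of a number field:
the maximum over all complex embeddings of the logarithm of the absolute value. -/
noncomputable def logHeight (K : Type*) [Field K] [NumberField K] (γ : K) : ℝ :=
  ⨆ σ : K →+* ℂ, Real.log ‖σ γ‖

/-!
A factor `γ₁` of `γ` with `house γ₁ ≤ e^H` is pinned down by the ideal `(γ₁)`, which divides `(γ)`,
and by the integer parts of `log ‖σ γ₁‖`, which lie in `[-(k - 1) H, H]` because the norm of `γ₁`
is at least `1`: two factors with the same data differ by a unit whose conjugates are all at
most `e`, and the minimal polynomials of such algebraic integers have coefficients bounded in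
terms of `k` only, so there are `O_k(1)` of them. The integer parts contribute
`(2 k H) ^ k = exp (O_k (log H))` choices.

The ideal divisors of `(γ)`, whose norm is at most `e^{k H}`, are counted by splitting its prime
factors at norm `t = ⌈√H⌉`. The distinct primes of norm at most `t` all divide `t!`, so there are
`O (k t log t)` of them, each with multiplicity `O (k H)`; the primes of norm above `t` number
`O (k H / log t)`. Together this gives `exp (O (k (log k + 1) H / log H))` divisors.
-/

open NumberField Polynomial Module UniqueFactorizationMonoid Real

theorem Set.ncard_le_card_mul_of_ncard_fiber_le {α β : Type*} {s : Set α} {f : α → β}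
    {T : Finset β} {M : ℕ} (hmaps : ∀ x ∈ s, f x ∈ T)
    (hfiber : ∀ b ∈ T, {x ∈ s | f x = b}.ncard ≤ M) :
    s.ncard ≤ T.card * M := by
  classical
  rcases s.finite_or_infinite with hs | hs
  · lift s to Finset α using hs
    rw [Set.ncard_coe_finset, mul_comm]
    refine Finset.card_le_mul_card_image_of_maps_to hmaps M fun b hb => ?_
    simpa [← Set.ncard_coe_finset] using hfiber b hb
  · simp [hs.ncard]

theorem ncard_le_ncard_of_mul_eq {M : Type*} [MonoidWithZero M] [IsLeftCancelMulZero M] {γ : M}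
    (hγ : γ ≠ 0) {s : Set (M × M)} {t : Set M} (hs : ∀ q ∈ s, q.1 * q.2 = γ ∧ q.1 ∈ t)
    (ht : t.Finite) : s.ncard ≤ t.ncard := by
  refine Set.ncard_le_ncard_of_injOn Prod.fst (fun q hq => (hs q hq).2)
    (fun q hq q' hq' h => ?_) ht
  have hq₁ : q.1 ≠ 0 := left_ne_zero_of_mul ((hs q hq).1 ▸ hγ)
  refine Prod.ext h (mul_left_cancel₀ hq₁ ?_)
  rw [(hs q hq).1, h, (hs q' hq').1]

namespace Multiset

variable {α : Type*} [DecidableEq α]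

theorem card_powerset_toFinset_le_two_pow (S : Multiset α) :
    S.powerset.toFinset.card ≤ 2 ^ card S :=
  (toFinset_card_le _).trans (card_powerset S).le

theorem card_powerset_toFinset_le_pow (S : Multiset α) :
    S.powerset.toFinset.card ≤ (card S + 1) ^ S.toFinset.card := by
  have hbox := Fintype.card_piFinset fun _ : S.toFinset => Finset.range (card S + 1)
  simp only [Finset.card_range, Finset.prod_const, Finset.card_univ, Fintype.card_coe] at hbox
  rw [← hbox]
  refine Finset.card_le_card_of_injOn (fun u (a : S.toFinset) => u.count (a : α))
    (fun u hu => ?_) fun u hu v hv huv => ?_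
  · simp only [Finset.mem_coe, mem_toFinset, mem_powerset] at hu
    simp only [Finset.mem_coe, Fintype.mem_piFinset, Finset.mem_range, Nat.lt_succ_iff]
    exact fun a => (count_le_card _ _).trans (card_le_card hu)
  · simp only [Finset.mem_coe, mem_toFinset, mem_powerset] at hu hv
    ext a
    by_cases ha : a ∈ S
    · exact congrFun huv ⟨a, mem_toFinset.2 ha⟩
    · rw [count_eq_zero_of_notMem fun h => ha (mem_of_le hu h),
        count_eq_zero_of_notMem fun h => ha (mem_of_le hv h)]

theorem card_powerset_toFinset_le_mul_filter (S : Multiset α) (p : α → Prop) [DecidablePred p] :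
    S.powerset.toFinset.card ≤
      (S.filter p).powerset.toFinset.card * (S.filter (¬ p ·)).powerset.toFinset.card := by
  rw [← Finset.card_product]
  refine Finset.card_le_card_of_injOn (fun u => (u.filter p, u.filter (¬ p ·)))
    (fun u hu => ?_) fun u _ v _ huv => ?_
  · simp only [Finset.mem_coe, mem_toFinset, mem_powerset, Finset.mem_product] at hu ⊢
    exact ⟨filter_le_filter _ hu, filter_le_filter _ hu⟩
  · rw [← filter_add_not p u, ← filter_add_not p v]
    exact congrArg₂ (· + ·) (congrArg Prod.fst huv) (congrArg Prod.snd huv)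

theorem card_powerset_toFinset_le_pow_mul_two_pow (S : Multiset α) (p : α → Prop)
    [DecidablePred p] :
    S.powerset.toFinset.card ≤
      (card S + 1) ^ (S.filter p).toFinset.card * 2 ^ card (S.filter (¬ p ·)) := by
  refine (card_powerset_toFinset_le_mul_filter S p).trans (Nat.mul_le_mul ?_ ?_)
  · exact (card_powerset_toFinset_le_pow _).trans
      (Nat.pow_le_pow_left (Nat.succ_le_succ (card_le_card (filter_le p S))) _)
  · exact card_powerset_toFinset_le_two_pow _

end Multiset

theorem mul_log_le_of_pow_le_exp {a X : ℝ} {c : ℕ} (ha : 0 < a) (h : a ^ c ≤ exp X) :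
    c * log a ≤ X := by
  rw [← log_pow, ← log_exp X]
  exact log_le_log (by positivity) h

theorem div_le_exp_one_of_floor_log_eq {x y : ℝ} (hx : 0 < x) (hy : 0 < y)
    (h : ⌊log x⌋ = ⌊log y⌋) : x / y ≤ exp 1 := by
  rw [div_le_iff₀ hy, ← exp_log hx, ← exp_log hy, ← exp_add]
  exact exp_le_exp.2 (by linarith [(abs_lt.1 (Int.abs_sub_lt_one_of_floor_eq_floor h)).2])

theorem card_Icc_floor_le {a b : ℝ} (hab : a ≤ b) :
    ((Finset.Icc ⌊a⌋ ⌊b⌋).card : ℝ) ≤ b - a + 2 := by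
  have h : ((Finset.Icc ⌊a⌋ ⌊b⌋).card : ℤ) = ⌊b⌋ + 1 - ⌊a⌋ := by
    rw [Int.card_Icc]
    exact Int.toNat_of_nonneg (by linarith [Int.floor_le_floor hab])
  have h' : ((Finset.Icc ⌊a⌋ ⌊b⌋).card : ℝ) = ((⌊b⌋ + 1 - ⌊a⌋ : ℤ) : ℝ) := by exact_mod_cast h
  rw [h']
  push_cast
  linarith [Int.floor_le b, Int.lt_floor_add_one a]

theorem add_mul_log_add_le_mul_div_log {A a b H : ℝ} (hH : 1 < H) (ha : 0 ≤ a) (hb : 0 ≤ b) :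
    A * H / log H + a * log H + b ≤ (A + 4 * a + b) * H / log H := by
  have hL : 0 < log H := log_pos hH
  have hLH : log H ≤ H := log_le_self (by linarith)
  have hsq : log H ^ 2 ≤ 4 * H := by
    have := log_le_rpow_div (x := H) (by linarith) (ε := 1 / 2) (by norm_num)
    rw [← sqrt_eq_rpow] at this
    nlinarith [sq_sqrt (show 0 ≤ H by linarith)]
  rw [div_add' _ _ _ hL.ne', div_add' _ _ _ hL.ne', div_le_div_iff_of_pos_right hL]
  nlinarith [mul_le_mul_of_nonneg_left hsq ha, mul_le_mul_of_nonneg_left hLH hb]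

theorem exp_mul_pow_mul_le {A H : ℝ} {k N : ℕ} (hk : 1 ≤ k) (hH : 2 ≤ H) :
    exp (A * H / log H) * (2 * k * H) ^ k * N ≤
      exp ((A + 4 * k + (k * log (2 * k) + N) + 1) * H / log H) := by
  have hk' : (1 : ℝ) ≤ k := Nat.one_le_cast.2 hk
  have hb : 0 ≤ k * log (2 * k) + N :=
    add_nonneg (mul_nonneg (Nat.cast_nonneg k) (log_nonneg (by linarith))) (Nat.cast_nonneg N)
  calc exp (A * H / log H) * (2 * k * H) ^ k * N
      ≤ exp (A * H / log H) * (2 * k * H) ^ k * exp N := by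
        gcongr
        linarith [add_one_le_exp (N : ℝ)]
    _ = exp (A * H / log H + k * log H + (k * log (2 * k) + N)) := by
        rw [add_assoc, ← add_assoc (k * log H), ← mul_add, ← log_mul (by positivity)
          (by positivity), exp_add, exp_add, exp_nat_mul, exp_log (by positivity), mul_comm H,
          mul_assoc]
    _ ≤ exp ((A + 4 * k + (k * log (2 * k) + N)) * H / log H) :=
        exp_le_exp.2 (add_mul_log_add_le_mul_div_log (by linarith) (by positivity) hb)
    _ ≤ _ := exp_le_exp.2 (div_le_div_of_nonneg_right (by nlinarith)
        (log_nonneg (by linarith)))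

theorem mul_log_two_le_of_mul_log_ceil_sqrt_le {n c : ℕ} {H : ℝ} (hH : 1 < H)
    (h : c * log (⌈√H⌉₊ + 1) ≤ n * H) : c * log 2 ≤ 2 * n * H / log H := by
  have hL : 0 < log H := log_pos hH
  have hsqrt : log H / 2 ≤ log (⌈√H⌉₊ + 1) := by
    rw [← log_sqrt (by linarith)]
    exact log_le_log (sqrt_pos.2 (by linarith)) (by linarith [Nat.le_ceil √H])
  have hc : (0 : ℝ) ≤ c := Nat.cast_nonneg c
  rw [le_div_iff₀ hL]
  nlinarith [mul_le_mul_of_nonneg_left hsqrt hc, log_two_lt_d9,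
    mul_nonneg (mul_nonneg hc hL.le) (sub_nonneg.2 (log_le_sub_one_of_pos two_pos))]

theorem mul_log_succ_le_of_mul_log_two_le {n c₁ c₂ : ℕ} {H : ℝ} (hn : 1 ≤ n) (hH : 2 ≤ H)
    (h₁ : c₁ * log 2 ≤ n * (⌈√H⌉₊ * log ⌈√H⌉₊)) (h₂ : c₂ * log 2 ≤ n * H) :
    c₁ * log (c₂ + 1) ≤ 96 * n * (log (3 * n) + 6) * H / log H := by
  -- everything is measured in powers of `E = H ^ (1 / 6)`, using `log H ≤ 6 E`
  set E := H ^ (6 : ℝ)⁻¹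
  have hE : 1 ≤ E := one_le_rpow (by linarith) (by norm_num)
  have hE3 : E ^ 3 = √H := by rw [← rpow_mul_natCast (by linarith), sqrt_eq_rpow]; norm_num
  have hE6 : E ^ 6 = H := by rw [show E ^ 6 = (E ^ 3) ^ 2 by ring, hE3, sq_sqrt (by linarith)]
  have hLE : log H ≤ 6 * E := by
    have := log_le_rpow_div (x := H) (by linarith) (ε := (6 : ℝ)⁻¹) (by norm_num)
    rwa [div_inv_eq_mul, mul_comm] at this
  have hL : 0 < log H := log_pos (by linarith)
  have hn' : (1 : ℝ) ≤ n := Nat.one_le_cast.2 hn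
  have hl : 0 ≤ log (3 * n) := log_nonneg (by linarith)
  set t := ⌈√H⌉₊
  have hs : 1 ≤ √H := by rw [← hE3]; exact one_le_pow₀ hE
  have ht : (t : ℝ) ≤ 2 * E ^ 3 := by linarith [Nat.ceil_lt_add_one (sqrt_nonneg H)]
  have hlogt : log t ≤ 4 * E := by
    have := log_le_log (by positivity) ht
    rw [log_mul (by norm_num) (by positivity), hE3, log_sqrt (by linarith)] at this
    linarith [log_two_lt_d9]
  have hc₁ : (c₁ : ℝ) ≤ 16 * n * E ^ 4 := by
    have : (t : ℝ) * log t ≤ 2 * E ^ 3 * (4 * E) :=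
      mul_le_mul ht hlogt (log_nonneg (by linarith [Nat.le_ceil √H])) (by positivity)
    nlinarith [Nat.cast_nonneg (α := ℝ) c₁, log_two_gt_d9]
  have hc₂ : log (c₂ + 1) ≤ (log (3 * n) + 6) * E := by
    have : (c₂ : ℝ) + 1 ≤ 3 * n * H := by
      nlinarith [Nat.cast_nonneg (α := ℝ) c₂, log_two_gt_d9]
    have := log_le_log (by positivity) this
    rw [log_mul (by positivity) (by linarith)] at this
    nlinarith
  rw [le_div_iff₀ hL]
  calc c₁ * log (c₂ + 1) * log H ≤ 16 * n * E ^ 4 * ((log (3 * n) + 6) * E) * (6 * E) := by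
        gcongr
        exact log_nonneg (by linarith [Nat.cast_nonneg (α := ℝ) c₂])
    _ = 96 * n * (log (3 * n) + 6) * H := by rw [← hE6]; ring

theorem mul_log_add_mul_log_two_le {n c₁ c₂ c₃ : ℕ} {H : ℝ} (hn : 1 ≤ n) (hH : 2 ≤ H)
    (h₁ : c₁ * log 2 ≤ n * (⌈√H⌉₊ * log ⌈√H⌉₊)) (h₂ : c₂ * log 2 ≤ n * H)
    (h₃ : c₃ * log (⌈√H⌉₊ + 1) ≤ n * H) :
    c₁ * log (c₂ + 1) + c₃ * log 2 ≤ 100 * n * (log (3 * n) + 6) * H / log H := by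
  have hsmall := mul_log_succ_le_of_mul_log_two_le hn hH h₁ h₂
  have hlarge := mul_log_two_le_of_mul_log_ceil_sqrt_le (by linarith) h₃
  have hl : 0 ≤ log (3 * n) := log_nonneg (by norm_cast; omega)
  have : 2 * n * H / log H ≤ 4 * n * (log (3 * n) + 6) * H / log H :=
    div_le_div_of_nonneg_right
      (by nlinarith [mul_nonneg (mul_nonneg (Nat.cast_nonneg (α := ℝ) n)
        (by linarith : (0 : ℝ) ≤ H)) hl])
      (log_nonneg (by linarith))
  linarith [show 100 * n * (log (3 * n) + 6) * H / log H =
    96 * n * (log (3 * n) + 6) * H / log H + 4 * n * (log (3 * n) + 6) * H / log H by ring]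

namespace Ideal

variable {S : Type*} [CommRing S] [IsDedekindDomain S] [Module.Free ℤ S] [Module.Finite ℤ S]

theorem two_le_absNorm_of_prime {P : Ideal S} (hP : Prime P) : 2 ≤ absNorm P := by
  have h0 : absNorm P ≠ 0 := absNorm_eq_zero_iff.not.2 hP.ne_zero
  have h1 : absNorm P ≠ 1 := absNorm_eq_one_iff.not.2 fun h => hP.not_isUnit (isUnit_iff.2 h)
  omega

theorem pow_card_le_absNorm_of_le_normalizedFactors {I : Ideal S} (hI : I ≠ 0)
    {T : Multiset (Ideal S)} (hT : T ≤ normalizedFactors I) {m : ℕ}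
    (hm : ∀ P ∈ T, m ≤ absNorm P) : m ^ Multiset.card T ≤ absNorm I := by
  have hdvd : T.prod ∣ I := by
    rw [← associated_iff_eq.1 (prod_normalizedFactors hI)]
    exact Multiset.prod_dvd_prod_of_le hT
  calc m ^ Multiset.card T = m ^ Multiset.card (T.map absNorm) := by rw [Multiset.card_map]
    _ ≤ (T.map absNorm).prod := Multiset.pow_card_le_prod (by simpa using hm)
    _ = absNorm T.prod := (map_multiset_prod _ _).symm
    _ ≤ absNorm I :=
      Nat.le_of_dvd (Nat.pos_of_ne_zero (absNorm_eq_zero_iff.not.2 hI)) (map_dvd _ hdvd)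

theorem two_pow_card_normalizedFactors_le_absNorm {I : Ideal S} (hI : I ≠ 0) :
    2 ^ Multiset.card (normalizedFactors I) ≤ absNorm I :=
  pow_card_le_absNorm_of_le_normalizedFactors hI le_rfl fun _ hP =>
    two_le_absNorm_of_prime (prime_of_normalized_factor _ hP)

open scoped Classical in
theorem two_pow_card_small_factors_le (I : Ideal S) (t : ℕ) :
    2 ^ ((normalizedFactors I).filter (absNorm · ≤ t)).toFinset.card ≤
      t.factorial ^ finrank ℤ S := by
  set J : Ideal S := span {(t.factorial : S)}
  have hJ : absNorm J = t.factorial ^ finrank ℤ S := absNorm_span_natCast _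
  have hJ0 : J ≠ 0 := fun h => by
    rw [h, Submodule.zero_eq_bot, absNorm_bot] at hJ
    exact pow_ne_zero _ (Nat.factorial_ne_zero t) hJ.symm
  -- a prime of norm at most `t` contains its norm, which divides `t!`
  have hsub : ((normalizedFactors I).filter (absNorm · ≤ t)).toFinset ⊆
      (normalizedFactors J).toFinset := by
    intro P hP
    simp only [Multiset.mem_toFinset, Multiset.mem_filter] at hP ⊢
    have hPprime := prime_of_normalized_factor P hP.1
    refine (mem_normalizedFactors_iff hJ0).2 ⟨isPrime_of_prime hPprime, ?_⟩
    obtain ⟨c, hc⟩ := Nat.dvd_factorial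
      (Nat.pos_of_ne_zero (absNorm_eq_zero_iff.not.2 hPprime.ne_zero)) hP.2
    rw [span_singleton_le_iff_mem, hc, Nat.cast_mul]
    exact mul_mem_right _ _ (absNorm_mem P)
  calc 2 ^ ((normalizedFactors I).filter (absNorm · ≤ t)).toFinset.card
      ≤ 2 ^ Multiset.card (normalizedFactors J) := Nat.pow_le_pow_right two_pos
        ((Finset.card_le_card hsub).trans (Multiset.toFinset_card_le _))
    _ ≤ t.factorial ^ finrank ℤ S := hJ ▸ two_pow_card_normalizedFactors_le_absNorm hJ0

theorem card_powerset_normalizedFactors_le_exp {I : Ideal S} (hI : I ≠ 0) {H : ℝ} (hH : 2 ≤ H)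
    (hnorm : (absNorm I : ℝ) ≤ exp (finrank ℤ S * H)) :
    ((normalizedFactors I).powerset.toFinset.card : ℝ) ≤
      exp (100 * finrank ℤ S * (log (3 * finrank ℤ S) + 6) * H / log H) := by
  classical
  set n := finrank ℤ S
  set t := ⌈√H⌉₊
  set F := normalizedFactors I
  set c₁ := (F.filter (absNorm · ≤ t)).toFinset.card
  set c₂ := Multiset.card F
  set c₃ := Multiset.card (F.filter (¬ absNorm · ≤ t))
  have h₁ : c₁ * log 2 ≤ n * (t * log t) := by
    have : (2 : ℝ) ^ c₁ ≤ ((t : ℝ) ^ t) ^ n := by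
      exact_mod_cast (two_pow_card_small_factors_le I t).trans
        (Nat.pow_le_pow_left (Nat.factorial_le_pow t) n)
    have := log_le_log (by positivity) this
    rwa [log_pow, log_pow, log_pow] at this
  have h₂ : c₂ * log 2 ≤ n * H := by
    refine mul_log_le_of_pow_le_exp two_pos (le_trans ?_ hnorm)
    exact_mod_cast two_pow_card_normalizedFactors_le_absNorm hI
  have h₃ : c₃ * log (t + 1) ≤ n * H := by
    refine mul_log_le_of_pow_le_exp (by positivity) (le_trans ?_ hnorm)
    exact_mod_cast pow_card_le_absNorm_of_le_normalizedFactors hI (Multiset.filter_le _ F)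
      fun P hP => Nat.succ_le_of_lt (not_le.1 (Multiset.mem_filter.1 hP).2)
  calc ((F.powerset.toFinset.card : ℕ) : ℝ) ≤ ((c₂ + 1 : ℕ) : ℝ) ^ c₁ * 2 ^ c₃ := by
        exact_mod_cast Multiset.card_powerset_toFinset_le_pow_mul_two_pow F (absNorm · ≤ t)
    _ = exp (c₁ * log (c₂ + 1) + c₃ * log 2) := by
        rw [exp_add, exp_nat_mul, exp_nat_mul, exp_log (by positivity), exp_log two_pos]
        push_cast
        ring
    _ ≤ _ := exp_le_exp.2 (mul_log_add_mul_log_two_le finrank_pos hH h₁ h₂ h₃)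

end Ideal

namespace NumberField

theorem isIntegral_div_of_span_eq {K : Type*} [Field K] {a b : 𝓞 K} (hb : b ≠ 0)
    (h : Ideal.span {a} = Ideal.span {b}) : IsIntegral ℤ ((a : K) / b) := by
  obtain ⟨u, rfl⟩ := Ideal.span_singleton_eq_span_singleton.1 h.symm
  push_cast
  rw [mul_div_cancel_left₀ _ (RingOfIntegers.coe_ne_zero_iff.2 hb)]
  exact RingOfIntegers.isIntegral_coe _

variable {K : Type*} [Field K] [NumberField K]

theorem house_le_exp_of_logHeight_le {x : K} {H : ℝ} (h : logHeight K x ≤ H) :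
    house x ≤ exp H := by
  obtain ⟨σ, -, hσ⟩ := Finset.exists_mem_eq_sup' Finset.univ_nonempty fun φ : K →+* ℂ => ‖φ x‖₊
  rw [house_eq_sup', hσ, coe_nnnorm]
  calc ‖σ x‖ ≤ exp (log ‖σ x‖) := le_exp_log _
    _ ≤ exp H := exp_le_exp.2 <| (le_ciSup (Set.finite_range _).bddAbove σ).trans h

theorem finite_setOf_house_le (B : ℝ) : {a : 𝓞 K | house (a : K) ≤ B}.Finite :=
  ((Embeddings.finite_of_norm_le K ℂ B).preimage RingOfIntegers.coe_injective.injOn).subset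
    fun a ha => ⟨RingOfIntegers.isIntegral_coe a, fun φ => (norm_embedding_le_house _ φ).trans ha⟩

theorem absNorm_span_singleton_eq_norm (a : 𝓞 K) :
    (Ideal.absNorm (Ideal.span {a}) : ℝ) = ‖Algebra.norm ℚ (a : K)‖ := by
  rw [Ideal.absNorm_span_singleton, Nat.cast_natAbs, ← Algebra.coe_norm_int]
  simp [Int.cast_abs, Int.norm_eq_abs]

theorem absNorm_span_singleton_le_exp {a : 𝓞 K} {H : ℝ} (h : house (a : K) ≤ exp H) :
    (Ideal.absNorm (Ideal.span {a}) : ℝ) ≤ exp (finrank ℚ K * H) := by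
  obtain ⟨σ⟩ := (inferInstance : Nonempty (K →+* ℂ))
  rw [absNorm_span_singleton_eq_norm, exp_nat_mul,
    ← Nat.sub_add_cancel (finrank_pos (R := ℚ) (M := K)), pow_succ']
  refine (norm_norm_le_norm_mul_house_pow (a : K) σ).trans (mul_le_mul ?_ ?_ ?_ ?_)
  · exact (norm_embedding_le_house _ σ).trans h
  · exact pow_le_pow_left₀ (house_nonneg _) h _
  · exact pow_nonneg (house_nonneg _) _
  · positivity

theorem exp_neg_le_norm_of_house_le {a : 𝓞 K} (ha : a ≠ 0) {H : ℝ}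
    (h : house (a : K) ≤ exp H) (σ : K →+* ℂ) :
    exp (-((finrank ℚ K - 1 : ℕ) * H)) ≤ ‖σ a‖ := by
  have hone : 1 ≤ ‖Algebra.norm ℚ (a : K)‖ := by
    rw [← absNorm_span_singleton_eq_norm]
    exact_mod_cast Nat.one_le_iff_ne_zero.2 (Ideal.absNorm_eq_zero_iff.not.2 (by simpa using ha))
  have := hone.trans ((norm_norm_le_norm_mul_house_pow (a : K) σ).trans
    (mul_le_mul_of_nonneg_left (pow_le_pow_left₀ (house_nonneg _) h _) (norm_nonneg _)))
  rw [← exp_nat_mul] at this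
  rw [exp_neg, inv_le_iff_one_le_mul₀ (exp_pos _)]
  linarith

theorem natDegree_minpoly_int_le {x : K} (hx : IsIntegral ℤ x) :
    (minpoly ℤ x).natDegree ≤ finrank ℚ K := by
  rw [← (minpoly.monic hx).natDegree_map (algebraMap ℤ ℚ),
    ← minpoly.isIntegrallyClosed_eq_field_fractions' ℚ hx]
  exact minpoly.natDegree_le x

theorem abs_coeff_minpoly_int_le {x : K} (hx : IsIntegral ℤ x) {B : ℝ}
    (hB : ∀ φ : K →+* ℂ, ‖φ x‖ ≤ B) (i : ℕ) :
    |((minpoly ℤ x).coeff i : ℝ)| ≤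
      max B 1 ^ finrank ℚ K * (finrank ℚ K).choose (finrank ℚ K / 2) := by
  have := Embeddings.coeff_bdd_of_norm_le hB i
  rwa [minpoly.isIntegrallyClosed_eq_field_fractions' ℚ hx, coeff_map, eq_intCast,
    Int.norm_cast_rat, Int.norm_eq_abs] at this

theorem exists_ncard_isIntegral_norm_le (n : ℕ) (B : ℝ) :
    ∃ N : ℕ, ∀ (K : Type*) [Field K] [NumberField K], finrank ℚ K = n →
      {x : K | IsIntegral ℤ x ∧ ∀ φ : K →+* ℂ, ‖φ x‖ ≤ B}.ncard ≤ N := by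
  set M : ℕ := ⌈max B 1 ^ n * n.choose (n / 2)⌉₊
  set box := Fintype.piFinset fun _ : Fin (n + 1) => Finset.Icc (-(M : ℤ)) M
  refine ⟨box.card * n, fun K _ _ hK => ?_⟩
  set W := {x : K | IsIntegral ℤ x ∧ ∀ φ : K →+* ℂ, ‖φ x‖ ≤ B}
  set coeffs := fun (x : K) (i : Fin (n + 1)) => (minpoly ℤ x).coeff i
  have hdeg (y : K) (hy : IsIntegral ℤ y) : (minpoly ℤ y).natDegree ≤ n :=
    hK ▸ natDegree_minpoly_int_le hy
  refine Set.ncard_le_card_mul_of_ncard_fiber_le (f := coeffs) (fun x hx => ?_) fun v _ => ?_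
  · simp only [box, coeffs, Fintype.mem_piFinset, Finset.mem_Icc, ← abs_le]
    intro i
    have := (abs_coeff_minpoly_int_le hx.1 hx.2 i).trans (Nat.le_ceil _)
    rw [hK] at this
    exact_mod_cast this
  · rcases Set.eq_empty_or_nonempty {x ∈ W | coeffs x = v} with hempty | ⟨x₀, ⟨hx₀, _⟩, hx₀v⟩
    · rw [hempty, Set.ncard_empty]
      exact Nat.zero_le n
    have hsub : {x ∈ W | coeffs x = v} ⊆ (minpoly ℤ x₀).rootSet K := by
      rintro x ⟨⟨hx, _⟩, hxv⟩
      have : minpoly ℤ x = minpoly ℤ x₀ :=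
        (ext_iff_natDegree_le (hdeg x hx) (hdeg x₀ hx₀)).2 fun i hi =>
          congrFun (hxv.trans hx₀v.symm) ⟨i, Nat.lt_succ_of_le hi⟩
      rw [mem_rootSet, ← this]
      exact ⟨minpoly.ne_zero hx, minpoly.aeval ℤ x⟩
    exact (Set.ncard_le_ncard hsub (rootSet_finite _ _)).trans
      ((ncard_rootSet_le _ _).trans (hdeg x₀ hx₀))

theorem floor_log_norm_mem_Icc {a : 𝓞 K} (ha : a ≠ 0) {H : ℝ} (h : house (a : K) ≤ exp H)
    (σ : K →+* ℂ) : ⌊log ‖σ a‖⌋ ∈ Finset.Icc ⌊-((finrank ℚ K - 1 : ℕ) * H)⌋ ⌊H⌋ := by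
  have hpos : 0 < ‖σ a‖ :=
    norm_pos_iff.2 ((map_ne_zero σ).2 (RingOfIntegers.coe_ne_zero_iff.2 ha))
  refine Finset.mem_Icc.2 ⟨Int.floor_le_floor ?_, Int.floor_le_floor ?_⟩
  · rw [le_log_iff_exp_le hpos]
    exact exp_neg_le_norm_of_house_le ha h σ
  · rw [log_le_iff_le_exp hpos]
    exact (norm_embedding_le_house _ σ).trans h

theorem span_mem_image_prod_powerset {a γ : 𝓞 K} (hγ : γ ≠ 0) (ha : a ∣ γ) :
    Ideal.span {a} ∈ (normalizedFactors (Ideal.span {γ})).powerset.toFinset.image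
      Multiset.prod := by
  classical
  have hspan : Ideal.span {a} ≠ 0 := by simpa using ne_zero_of_dvd_ne_zero hγ ha
  refine Finset.mem_image.2 ⟨normalizedFactors (Ideal.span {a}), ?_,
    associated_iff_eq.1 (prod_normalizedFactors hspan)⟩
  rw [Multiset.mem_toFinset, Multiset.mem_powerset,
    ← dvd_iff_normalizedFactors_le_normalizedFactors hspan (by simpa using hγ)]
  exact Ideal.dvd_iff_le.2 (Ideal.span_singleton_le_span_singleton.2 ha)

theorem ncard_le_of_span_eq_of_floor_log_eq {a₀ : 𝓞 K} (ha₀ : a₀ ≠ 0) {s : Set (𝓞 K)}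
    (hs : ∀ a ∈ s, a ≠ 0 ∧ Ideal.span {a} = Ideal.span {a₀} ∧
      ∀ σ : K →+* ℂ, ⌊log ‖σ a‖⌋ = ⌊log ‖σ a₀‖⌋) :
    s.ncard ≤ {x : K | IsIntegral ℤ x ∧ ∀ φ : K →+* ℂ, ‖φ x‖ ≤ exp 1}.ncard := by
  have hnorm {a : 𝓞 K} (ha : a ≠ 0) (σ : K →+* ℂ) : 0 < ‖σ a‖ :=
    norm_pos_iff.2 ((map_ne_zero σ).2 (RingOfIntegers.coe_ne_zero_iff.2 ha))
  refine Set.ncard_le_ncard_of_injOn (fun a => (a : K) / a₀) (fun a ha => ?_)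
    (fun a _ a' _ h => ?_) (Embeddings.finite_of_norm_le K ℂ _)
  · obtain ⟨ha0, hspan, hlog⟩ := hs a ha
    refine ⟨isIntegral_div_of_span_eq ha₀ hspan, fun σ => ?_⟩
    rw [map_div₀, norm_div]
    exact div_le_exp_one_of_floor_log_eq (hnorm ha0 σ) (hnorm ha₀ σ) (hlog σ)
  · exact RingOfIntegers.coe_injective
      ((div_left_inj' (RingOfIntegers.coe_ne_zero_iff.2 ha₀)).1 h)

theorem ncard_setOf_dvd_house_le_le {γ : 𝓞 K} (hγ : γ ≠ 0) (H : ℝ) {N : ℕ}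
    (hN : {x : K | IsIntegral ℤ x ∧ ∀ φ : K →+* ℂ, ‖φ x‖ ≤ exp 1}.ncard ≤ N) :
    {a : 𝓞 K | a ∣ γ ∧ house (a : K) ≤ exp H}.ncard ≤
      (normalizedFactors (Ideal.span {γ})).powerset.toFinset.card *
        (Finset.Icc ⌊-((finrank ℚ K - 1 : ℕ) * H)⌋ ⌊H⌋).card ^ finrank ℚ K * N := by
  classical
  set box := Finset.Icc ⌊-((finrank ℚ K - 1 : ℕ) * H)⌋ ⌊H⌋
  set D := (normalizedFactors (Ideal.span {γ})).powerset.toFinset.image Multiset.prod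
  set logs := Fintype.piFinset fun _ : K →+* ℂ => box
  have hcard : (D ×ˢ logs).card ≤
      (normalizedFactors (Ideal.span {γ})).powerset.toFinset.card * box.card ^ finrank ℚ K := by
    rw [Finset.card_product, Fintype.card_piFinset, Finset.prod_const, Finset.card_univ,
      Embeddings.card]
    exact Nat.mul_le_mul_right _ Finset.card_image_le
  set f := fun a : 𝓞 K => (Ideal.span {a}, fun σ : K →+* ℂ => ⌊log ‖σ a‖⌋)
  refine (Set.ncard_le_card_mul_of_ncard_fiber_le (f := f) (T := D ×ˢ logs) ?_ ?_).trans
    (Nat.mul_le_mul_right _ hcard)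
  · rintro a ⟨ha, hH⟩
    exact Finset.mem_product.2 ⟨span_mem_image_prod_powerset hγ ha, Fintype.mem_piFinset.2
      (floor_log_norm_mem_Icc (ne_zero_of_dvd_ne_zero hγ ha) hH)⟩
  · rintro v -
    rcases Set.eq_empty_or_nonempty {a ∈ {a : 𝓞 K | a ∣ γ ∧ house (a : K) ≤ exp H} | f a = v}
      with hempty | ⟨a₀, ⟨ha₀, -⟩, ha₀v⟩
    · rw [hempty, Set.ncard_empty]
      exact Nat.zero_le N
    refine le_trans (ncard_le_of_span_eq_of_floor_log_eq (ne_zero_of_dvd_ne_zero hγ ha₀) ?_) hN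
    rintro a ⟨⟨ha, -⟩, hav⟩
    have hav := hav.trans ha₀v.symm
    exact ⟨ne_zero_of_dvd_ne_zero hγ ha, congrArg Prod.fst hav, congrFun (congrArg Prod.snd hav)⟩

theorem ncard_setOf_dvd_house_le_le_exp {γ : 𝓞 K} (hγ : γ ≠ 0) {H : ℝ} (hH : 2 ≤ H)
    (hγH : house (γ : K) ≤ exp H) {N : ℕ}
    (hN : {x : K | IsIntegral ℤ x ∧ ∀ φ : K →+* ℂ, ‖φ x‖ ≤ exp 1}.ncard ≤ N) :
    ({a : 𝓞 K | a ∣ γ ∧ house (a : K) ≤ exp H}.ncard : ℝ) ≤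
      exp (100 * finrank ℚ K * (log (3 * finrank ℚ K) + 6) * H / log H) *
        (2 * finrank ℚ K * H) ^ finrank ℚ K * N := by
  have hdiv := Ideal.card_powerset_normalizedFactors_le_exp (I := Ideal.span {γ})
    (by simpa using hγ) hH (by rw [RingOfIntegers.rank]; exact absNorm_span_singleton_le_exp hγH)
  rw [RingOfIntegers.rank] at hdiv
  have hbox : ((Finset.Icc ⌊-((finrank ℚ K - 1 : ℕ) * H)⌋ ⌊H⌋).card : ℝ) ≤
      2 * finrank ℚ K * H := by
    have hk : (1 : ℝ) ≤ finrank ℚ K := Nat.one_le_cast.2 finrank_pos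
    rw [Nat.cast_sub finrank_pos, Nat.cast_one]
    refine (card_Icc_floor_le (by nlinarith)).trans ?_
    nlinarith
  refine (Nat.cast_le.2 (ncard_setOf_dvd_house_le_le hγ H hN)).trans ?_
  push_cast
  gcongr

end NumberField

theorem stmt_13_general (k : ℕ) :
    ∃ C : ℝ, 0 < C ∧
      ∀ (K : Type) [Field K] [NumberField K], Module.finrank ℚ K = k →
        ∀ (γ : NumberField.RingOfIntegers K), γ ≠ 0 →
          ∀ H : ℝ, 2 ≤ H → logHeight K (γ : K) ≤ H →
            {q : NumberField.RingOfIntegers K × NumberField.RingOfIntegers K |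
                q.1 * q.2 = γ ∧ logHeight K (q.1 : K) ≤ H ∧
                logHeight K (q.2 : K) ≤ H}.ncard ≤
              Real.exp (C * H / Real.log H) := by
  obtain ⟨N, hN⟩ := exists_ncard_isIntegral_norm_le k (exp 1)
  have hlog (m : ℕ) : 0 ≤ log (m * k) := by exact_mod_cast log_natCast_nonneg (m * k)
  refine ⟨100 * k * (log (3 * k) + 6) + 4 * k + (k * log (2 * k) + N) + 1,
    by have := hlog 3; have := hlog 2; positivity, ?_⟩
  intro K _ _ hK γ hγ H hH hγH
  subst hK
  calc _ ≤ ({a : 𝓞 K | a ∣ γ ∧ house (a : K) ≤ exp H}.ncard : ℝ) := by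
        refine Nat.cast_le.2 (ncard_le_ncard_of_mul_eq hγ ?_ ((finite_setOf_house_le _).subset
          fun a ha => ha.2))
        rintro q ⟨hq, hq₁, -⟩
        exact ⟨hq, ⟨q.2, hq.symm⟩, house_le_exp_of_logHeight_le hq₁⟩
    _ ≤ _ := ncard_setOf_dvd_house_le_le_exp hγ hH (house_le_exp_of_logHeight_le hγH) (hN K rfl)
    _ ≤ _ := exp_mul_pow_mul_le finrank_pos hH

theorem stmt_13 (k : ℕ) (hk : 1 ≤ k) :
    ∃ C : ℝ, 0 < C ∧
      ∀ (K : Type) [Field K] [NumberField K], Module.finrank ℚ K = k →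
        ∀ (γ : NumberField.RingOfIntegers K), γ ≠ 0 →
          ∀ H : ℝ, 2 ≤ H → logHeight K (γ : K) ≤ H →
            {q : NumberField.RingOfIntegers K × NumberField.RingOfIntegers K |
                q.1 * q.2 = γ ∧ logHeight K (q.1 : K) ≤ H ∧
                logHeight K (q.2 : K) ≤ H}.ncard ≤
              Real.exp (C * H / Real.log H) :=
  stmt_13_general k
end
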